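/- arXiv:2308.15803 — 4 statements merged into one kernel-verified Lean document; each statement's English description precedes it below -/
import Mathlib

section
/- Under the adaptive update law with initial condition α(0) = 0, the function α is nonnegative and bounded on [0, ∞), and its derivative α̇ is bounded on [0, ∞). -/
open Set Filter Topology

lemma barrier (f f' : ℝ → ℝ) (M : ℝ)
    (hf : ∀ t ∈ Ici (0:ℝ), HasDerivAt f (f' t) t)
    (h0 : f 0 ≤ M)
    (hb : ∀ t ∈ Ici (0:ℝ), f t = M → f' t < 0) :
    ∀ t ∈ Ici (0:ℝ), f t ≤ M := by
  intro t₁ ht₁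
  by_contra hgt
  push_neg at hgt
  set S : Set ℝ := Icc 0 t₁ ∩ f ⁻¹' Iic M with hS
  have hfc : ContinuousOn f (Icc 0 t₁) := fun x hx =>
    ((hf x hx.1).continuousAt).continuousWithinAt
  have hSclosed : IsClosed S :=
    hfc.preimage_isClosed_of_isClosed isClosed_Icc isClosed_Iic
  have hSne : S.Nonempty := ⟨0, ⟨le_refl 0, ht₁⟩, h0⟩
  have hSbdd : BddAbove S := ⟨t₁, fun x hx => hx.1.2⟩
  have hsmem : sSup S ∈ S := hSclosed.csSup_mem hSne hSbdd
  have hs : sSup S = sSup S := rfl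
  generalize hgen : sSup S = s at hsmem ⊢
  have hs0 : 0 ≤ s := hsmem.1.1
  have hst : s ≤ t₁ := hsmem.1.2
  have hfsle : f s ≤ M := hsmem.2
  have hslt : s < t₁ := lt_of_le_of_ne hst (by rintro rfl; exact absurd hfsle (not_le.2 hgt))
  -- points in (s, t₁] have f > M
  have hgt' : ∀ x, s < x → x ≤ t₁ → M < f x := by
    intro x hsx hxt
    by_contra h
    push_neg at h
    exact absurd (hgen ▸ le_csSup hSbdd (⟨⟨hs0.trans hsx.le, hxt⟩, h⟩ : x ∈ S)) (not_le.2 hsx)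
  -- f s = M by continuity from the right
  have hfse : f s = M := by
    refine le_antisymm hfsle ?_
    have hcont : ContinuousAt f s := (hf s hs0).continuousAt
    have : Tendsto f (𝓝[>] s) (𝓝 (f s)) := hcont.continuousWithinAt.tendsto
    have hev : ∀ᶠ x in 𝓝[>] s, M ≤ f x := by
      filter_upwards [Ioo_mem_nhdsGT_of_mem ⟨le_refl s, hslt⟩] with x hx
      exact (hgt' x hx.1 hx.2.le).le
    exact ge_of_tendsto this hev
  have hd : f' s < 0 := hb s hs0 hfse
  -- slope argument: f < M just to the right of s, contradiction
  have hslope : Tendsto (slope f s) (𝓝[≠] s) (𝓝 (f' s)) :=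
    (hasDerivAt_iff_tendsto_slope.1 (hf s hs0))
  have hslope' : Tendsto (slope f s) (𝓝[>] s) (𝓝 (f' s)) :=
    hslope.mono_left (nhdsWithin_mono s (fun x hx => ne_of_gt hx))
  have hev : ∀ᶠ x in 𝓝[>] s, slope f s x < 0 :=
    hslope'.eventually (eventually_lt_nhds hd)
  have hev2 : ∀ᶠ x in 𝓝[>] s, x < t₁ := Filter.Tendsto.eventually_lt_const hslt
      (tendsto_nhdsWithin_of_tendsto_nhds tendsto_id)
  obtain ⟨x, ⟨hx1, hx2⟩, hx3⟩ := ((hev.and hev2).and self_mem_nhdsWithin).exists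
  have hxs : (0:ℝ) < x - s := sub_pos.2 hx3
  have hfx : f x - f s < 0 := by
    have h := mul_neg_of_neg_of_pos hx1 hxs
    rwa [slope_def_field, div_mul_cancel₀ _ hxs.ne'] at h
  have := hgt' x hx3 hx2.le
  linarith [hfse ▸ this]


/-- Under the adaptive update law `α̇ = 2θ₀/(ψ + α) − κα` with `α(0) = 0`, where `κ, θ₀ > 0`
and `ψ` is bounded and continuously differentiable with bounded derivative on `[0,∞)` and
`ψ + α > 0`, the function `α` is nonnegative and bounded on `[0,∞)` and its derivative
is bounded on `[0,∞)`. -/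
theorem adaptive_law_bounded (κ θ₀ : ℝ) (hκ : 0 < κ) (hθ : 0 < θ₀)
    (ψ ψ' α α' : ℝ → ℝ)
    (hψ : ∀ t ∈ Ici (0 : ℝ), HasDerivAt ψ (ψ' t) t)
    (hψ'c : ContinuousOn ψ' (Ici 0))
    (hψbdd : ∃ C : ℝ, ∀ t ∈ Ici (0 : ℝ), |ψ t| ≤ C ∧ |ψ' t| ≤ C)
    (hα : ∀ t ∈ Ici (0 : ℝ), HasDerivAt α (α' t) t)
    (hpos : ∀ t ∈ Ici (0 : ℝ), 0 < ψ t + α t)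
    (hlaw : ∀ t ∈ Ici (0 : ℝ), α' t = 2 * θ₀ / (ψ t + α t) - κ * α t)
    (h0 : α 0 = 0) :
    (∀ t ∈ Ici (0 : ℝ), 0 ≤ α t) ∧
      (∃ C : ℝ, ∀ t ∈ Ici (0 : ℝ), |α t| ≤ C) ∧
      (∃ C : ℝ, ∀ t ∈ Ici (0 : ℝ), |α' t| ≤ C) := by
  obtain ⟨C, hC⟩ := hψbdd
  have hC0 : 0 ≤ C := (abs_nonneg _).trans (hC 0 self_mem_Ici).1
  -- nonnegativity
  have hnn : ∀ t ∈ Ici (0 : ℝ), 0 ≤ α t := by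
    have := barrier (fun t => -α t) (fun t => -α' t) 0
      (fun t ht => (hα t ht).neg) (by simp [h0])
      (fun t ht hz => by
        have hz' : α t = 0 := by simpa using hz
        have hp := hpos t ht
        have : 0 < α' t := by
          rw [hlaw t ht, hz', mul_zero, sub_zero, add_zero]
          exact div_pos (by linarith) (by linarith)
        show -α' t < 0
        linarith)
    intro t ht
    have h : -α t ≤ 0 := this t ht
    linarith
  -- upper bound
  set M : ℝ := max (C + 1) ((2 * θ₀ + 1) / κ) with hM
  have hM1 : C + 1 ≤ M := le_max_left _ _
  have hM2 : (2 * θ₀ + 1) / κ ≤ M := le_max_right _ _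
  have hMpos : 0 < M := lt_of_lt_of_le (by positivity) hM2
  have hub : ∀ t ∈ Ici (0 : ℝ), α t ≤ M := by
    refine barrier α α' M hα (by rw [h0]; linarith) ?_
    intro t ht he
    have hψt := (hC t ht).1
    have hψlb : -C ≤ ψ t := (abs_le.1 hψt).1
    have h1 : (1:ℝ) ≤ ψ t + α t := by rw [he]; linarith
    have h2 : 2 * θ₀ / (ψ t + α t) ≤ 2 * θ₀ := div_le_self (by linarith) h1
    have h3 : 2 * θ₀ + 1 ≤ κ * M := by
      rw [div_le_iff₀ hκ] at hM2; linarith [hM2]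
    have h4 : κ * α t = κ * M := by rw [he]
    rw [hlaw t ht]; linarith
  -- lower bound on ψ + α
  set B : ℝ := C + κ * M with hB
  have hB0 : 0 ≤ B := by positivity
  set ε : ℝ := min (ψ 0 + α 0) (2 * θ₀ / (B + 1)) with hε
  have hεpos : 0 < ε := lt_min (hpos 0 self_mem_Ici) (by positivity)
  have hlb : ∀ t ∈ Ici (0 : ℝ), ε ≤ ψ t + α t := by
    have := barrier (fun t => -(ψ t + α t)) (fun t => -(ψ' t + α' t)) (-ε)
      (fun t ht => ((hψ t ht).add (hα t ht)).neg)
      (neg_le_neg (min_le_left (ψ 0 + α 0) (2 * θ₀ / (B + 1))))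
      (fun t ht he => by
        have he' : ψ t + α t = ε := neg_injective he
        have hψ'lb : -C ≤ ψ' t := (abs_le.1 (hC t ht).2).1
        have hαub : α t ≤ M := hub t ht
        have hdiv : B + 1 ≤ 2 * θ₀ / ε := by
          rw [le_div_iff₀ hεpos]
          have := min_le_right (ψ 0 + α 0) (2 * θ₀ / (B + 1))
          rw [← hε, le_div_iff₀ (by positivity : (0:ℝ) < B + 1)] at this
          linarith
        have : 0 < ψ' t + α' t := by
          rw [hlaw t ht, he']
          have hκα : κ * α t ≤ κ * M := by nlinarith
          simp only [hB] at hdiv ⊢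
          linarith
        show -(ψ' t + α' t) < 0
        linarith)
    intro t ht
    have h : -(ψ t + α t) ≤ -ε := this t ht
    linarith
  refine ⟨hnn, ⟨M, fun t ht => abs_le.2 ⟨by linarith [hnn t ht], hub t ht⟩⟩,
    ⟨2 * θ₀ / ε + κ * M, fun t ht => ?_⟩⟩
  have h1 := hlb t ht
  have h2 := hnn t ht
  have h3 := hub t ht
  have hp := hpos t ht
  have hd1 : 2 * θ₀ / (ψ t + α t) ≤ 2 * θ₀ / ε := div_le_div_of_nonneg_left (by linarith) hεpos h1
  have hd0 : 0 ≤ 2 * θ₀ / (ψ t + α t) := le_of_lt (div_pos (by linarith) hp)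
  have hκα1 : 0 ≤ κ * α t := by positivity
  have hκα2 : κ * α t ≤ κ * M := by nlinarith
  rw [hlaw t ht]
  rw [abs_le]
  constructor <;> linarith
end

section
/- Under the adaptive update law, the function t ↦ ψ(t) + α(t) does not converge to 0 as t → ∞. -/
open Set Filter

/-- Under the adaptive update law `α̇ = 2θ₀/(ψ + α) − κα` with `κ, θ₀ > 0`, `ψ` bounded and
continuously differentiable with bounded derivative on `[0,∞)`, and `ψ + α > 0`, the
function `t ↦ ψ(t) + α(t)` does not converge to `0` as `t → ∞`. -/
theorem adaptive_law_not_tendsto_zero (κ θ₀ : ℝ) (hκ : 0 < κ) (hθ : 0 < θ₀)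
    (ψ ψ' α α' : ℝ → ℝ)
    (hψ : ∀ t ∈ Ici (0 : ℝ), HasDerivAt ψ (ψ' t) t)
    (hψ'c : ContinuousOn ψ' (Ici 0))
    (hψbdd : ∃ C : ℝ, ∀ t ∈ Ici (0 : ℝ), |ψ t| ≤ C ∧ |ψ' t| ≤ C)
    (hα : ∀ t ∈ Ici (0 : ℝ), HasDerivAt α (α' t) t)
    (hpos : ∀ t ∈ Ici (0 : ℝ), 0 < ψ t + α t)
    (hlaw : ∀ t ∈ Ici (0 : ℝ), α' t = 2 * θ₀ / (ψ t + α t) - κ * α t) :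
    ¬ Tendsto (fun t => ψ t + α t) atTop (nhds 0) := by
  intro h
  obtain ⟨C, hC⟩ := hψbdd
  have hC0 : 0 ≤ C := le_trans (abs_nonneg _) (hC 0 (mem_Ici.mpr le_rfl)).1
  set M : ℝ := κ * (C + 1) + C + 1 with hMdef
  have hM : 0 < M := by positivity
  set ε : ℝ := min (2 * θ₀ / M) 1 with hεdef
  have hε : 0 < ε := lt_min (by positivity) one_pos
  -- f eventually ≤ ε/2
  have hsmall : ∀ᶠ t in atTop, ψ t + α t < ε / 2 := by
    have := h.eventually (gt_mem_nhds (show (0:ℝ) < ε / 2 by linarith))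
    exact this
  obtain ⟨T₀, hT₀⟩ := eventually_atTop.mp hsmall
  set T : ℝ := max T₀ 0 with hTdef
  have hT0 : (0:ℝ) ≤ T := le_max_right _ _
  have hTsmall : ∀ t, T ≤ t → ψ t + α t < ε / 2 :=
    fun t ht => hT₀ t (le_trans (le_max_left _ _) ht)
  set f : ℝ → ℝ := fun t => ψ t + α t with hfdef
  -- derivative bound on Ici T
  have hderiv : ∀ t, T ≤ t → 1 ≤ ψ' t + α' t := by
    intro t ht
    have ht0 : t ∈ Ici (0:ℝ) := le_trans hT0 ht
    have hft : 0 < f t := hpos t ht0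
    have hftε : f t < ε / 2 := hTsmall t ht
    have h1 : M ≤ 2 * θ₀ / f t := by
      rw [le_div_iff₀ hft]
      have hεM : ε ≤ 2 * θ₀ / M := min_le_left _ _
      have : f t ≤ 2 * θ₀ / M := by linarith
      calc M * f t ≤ M * (2 * θ₀ / M) := by nlinarith
        _ = 2 * θ₀ := by field_simp
    have hα_le : α t ≤ C + 1 := by
      have h2 : |ψ t| ≤ C := (hC t ht0).1
      have h3 : ε ≤ 1 := min_le_right _ _
      have : α t = f t - ψ t := by simp [hfdef]
      have h4 : -C ≤ ψ t := by cases abs_le.mp h2; linarith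
      linarith
    have hψ'ge : -C ≤ ψ' t := by
      have := (hC t ht0).2; cases abs_le.mp this; linarith
    have := hlaw t ht0
    have hκα : κ * α t ≤ κ * (C + 1) := by nlinarith
    rw [this]
    have : 2 * θ₀ / (ψ t + α t) = 2 * θ₀ / f t := rfl
    linarith [h1]
  -- MVT on [T, T+1]
  have hcont : ContinuousOn f (Ici T) := by
    intro t ht
    have ht0 : t ∈ Ici (0:ℝ) := le_trans hT0 ht
    exact (((hψ t ht0).add (hα t ht0)).continuousAt).continuousWithinAt
  have hdiff : DifferentiableOn ℝ f (interior (Ici T)) := by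
    intro x hx
    rw [interior_Ici] at hx
    have hx0 : x ∈ Ici (0:ℝ) := le_of_lt (lt_of_le_of_lt hT0 hx)
    exact (((hψ x hx0).add (hα x hx0)).differentiableAt).differentiableWithinAt
  have hge : ∀ x ∈ interior (Ici T), (1:ℝ) ≤ deriv f x := by
    intro x hx
    rw [interior_Ici] at hx
    have hx0 : x ∈ Ici (0:ℝ) := le_of_lt (lt_of_le_of_lt hT0 hx)
    have hd : HasDerivAt f (ψ' x + α' x) x := (hψ x hx0).add (hα x hx0)
    rw [hd.deriv]
    exact hderiv x (le_of_lt hx)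
  have hkey := Convex.mul_sub_le_image_sub_of_le_deriv (convex_Ici T) hcont hdiff hge
    T (le_refl T) (T + 1) (by simp) (by linarith)
  have hfT : 0 < f T := hpos T hT0
  have hfT1 : f (T + 1) < ε / 2 := hTsmall (T + 1) (by linarith)
  have hε1 : ε ≤ 1 := min_le_right _ _
  -- 1 * (T+1 - T) ≤ f (T+1) - f T
  have hfin : (1:ℝ) ≤ f (T + 1) - f T := by
    have := hkey; simpa using this
  clear_value ε M T f
  linarith
end

section
/- Let κ > 0 and θ₀ > 0 be constants, let ψ : [0,∞) → ℝ be continuous and bounded, and let α : [0,∞) → ℝ be differentiable with ψ(t) + α(t) ≠ 0 for all t ≥ 0 and α̇(t) = 2θ₀/(ψ(t) + α(t)) − κ·α(t). Then α(t) does not tend to −∞ as t → ∞. -/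
/-!
If `α → -∞`, then `ψ + α → -∞` because `ψ` is bounded, so `2θ₀ / (ψ + α) → 0` while
`-κα → +∞`: the right-hand side of the law, i.e. `α̇`, is eventually positive. Then `α` is
eventually increasing, which is incompatible with `α → -∞`.
-/

open Set Filter

theorem not_tendsto_atBot_of_eventually_hasDerivAt_nonneg {f f' : ℝ → ℝ}
    (hf : ∀ᶠ t in atTop, HasDerivAt f (f' t) t ∧ 0 ≤ f' t) : ¬ Tendsto f atTop atBot := by
  intro hbot
  obtain ⟨T, hT⟩ := hf.exists_forall_of_atTop
  have hmono : MonotoneOn f (Ici T) := by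
    refine monotoneOn_of_hasDerivWithinAt_nonneg (f' := f') (convex_Ici T)
      (fun t ht => (hT t ht).1.continuousAt.continuousWithinAt) (fun t ht => ?_) (fun t ht => ?_)
    · rw [interior_Ici] at ht
      exact (hT t ht.out.le).1.hasDerivWithinAt
    · rw [interior_Ici] at ht
      exact (hT t ht.out.le).2
  obtain ⟨t, hlt, hTt⟩ :=
    ((hbot.eventually_lt_atBot (f T)).and (eventually_ge_atTop T)).exists
  exact (hmono self_mem_Ici hTt hTt).not_gt hlt

theorem tendsto_adaptive_law_rhs_atTop {κ θ₀ : ℝ} (hκ : 0 < κ) {ψ α : ℝ → ℝ} {C : ℝ}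
    (hψ : ∀ᶠ t in atTop, ψ t ≤ C) (hα : Tendsto α atTop atBot) :
    Tendsto (fun t => 2 * θ₀ / (ψ t + α t) - κ * α t) atTop atTop := by
  have hquot : Tendsto (fun t => 2 * θ₀ / (ψ t + α t)) atTop (nhds 0) :=
    tendsto_const_nhds.div_atBot (tendsto_atBot_add_left_of_ge' _ C hψ hα)
  have hdamp : Tendsto (fun t => -κ * α t) atTop atTop :=
    tendsto_const_nhds.neg_mul_atBot (neg_neg_of_pos hκ) hα
  simpa only [sub_eq_add_neg, neg_mul, zero_add] using hquot.add_atTop hdamp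

theorem adaptive_law_not_tendsto_atBot_general (κ θ₀ : ℝ) (hκ : 0 < κ)
    (ψ α : ℝ → ℝ)
    (hψbdd : ∃ C : ℝ, ∀ t ∈ Ici (0 : ℝ), |ψ t| ≤ C)
    (hα : ∀ t ∈ Ici (0 : ℝ),
      HasDerivAt α (2 * θ₀ / (ψ t + α t) - κ * α t) t) :
    ¬ Tendsto α atTop atBot := by
  intro hbot
  obtain ⟨C, hC⟩ := hψbdd
  have hψ : ∀ᶠ t in atTop, ψ t ≤ C :=
    (eventually_ge_atTop 0).mono fun t ht => (abs_le.mp (hC t ht)).2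
  refine not_tendsto_atBot_of_eventually_hasDerivAt_nonneg
    (f' := fun t => 2 * θ₀ / (ψ t + α t) - κ * α t) ?_ hbot
  filter_upwards [eventually_ge_atTop 0,
    (tendsto_adaptive_law_rhs_atTop hκ hψ hbot).eventually_ge_atTop 0] with t ht hpos
  exact ⟨hα t ht, hpos⟩

/-- Under the adaptive update law `α̇ = 2θ₀/(ψ + α) − κα` with `κ, θ₀ > 0`, `ψ` continuous
and bounded on `[0,∞)`, and `ψ + α ≠ 0`, the function `α` does not tend to `−∞`. -/
theorem adaptive_law_not_tendsto_atBot (κ θ₀ : ℝ) (hκ : 0 < κ) (hθ : 0 < θ₀)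
    (ψ α : ℝ → ℝ)
    (hψc : ContinuousOn ψ (Ici 0))
    (hψbdd : ∃ C : ℝ, ∀ t ∈ Ici (0 : ℝ), |ψ t| ≤ C)
    (hne : ∀ t ∈ Ici (0 : ℝ), ψ t + α t ≠ 0)
    (hα : ∀ t ∈ Ici (0 : ℝ),
      HasDerivAt α (2 * θ₀ / (ψ t + α t) - κ * α t) t) :
    ¬ Tendsto α atTop atBot :=
  adaptive_law_not_tendsto_atBot_general κ θ₀ hκ ψ α hψbdd hα
end

section
/- (Funnel invariance.) Consider the system ẋ = f(x) + g(x)u with f, g locally Lipschitz and g(x)g(x)ᵀ positive definite for all x, a funnel (γ_L, γ_U), and the funnel controller û with gain k > 0. Let T > 0 and let x : [0,T] → ℝⁿ be any admissible closed-loop solution. Then γ_{i,L}(t) < x_i(t) < γ_{i,U}(t) for every t ∈ [0,T] and every i ∈ {1,…,n}; that is, the controller renders the funnel forward invariant and the trajectory never reaches the funnel boundary. -/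
/-!
Along a closed-loop solution the controller cancels `g` and the `γ̇_d`-term, so each transformed
error obeys `ε̇ᵢ = ξᵢ (dᵢ − k ξᵢ εᵢ)` with drift `dᵢ = fᵢ(x) − γ̇ᵢ,ₛ/2`. While `x` is inside the
funnel, `|dᵢ| ≤ M + C` and `ξᵢ ≥ 2/C`, so `εᵢ` cannot cross a level `±B` with
`k (2/C) B > M + C`. Since `εᵢ = ln ((xᵢ − γᵢ,L)/(γᵢ,U − xᵢ))`, the bound `|εᵢ| ≤ B` keeps `xᵢ` at
distance at least `δ/(e^B + 1)` from both boundaries, and this uniform margin prevents the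
trajectory from ever reaching them.
-/

open Matrix Set

/-- Normalized error `ê = (2z − (U + L))/(U − L)`. -/
noncomputable def nerr (L U z : ℝ) : ℝ := (2 * z - (U + L)) / (U - L)

/-- Transformed error `ε̂ = ln((1 + ê)/(1 − ê))`. -/
noncomputable def terr (L U z : ℝ) : ℝ := Real.log ((1 + nerr L U z) / (1 - nerr L U z))

/-- Diagonal gain entry `ξ̂ = 4/((U − L)(1 − ê²))`. -/
noncomputable def xhat (L U z : ℝ) : ℝ := 4 / ((U - L) * (1 - (nerr L U z) ^ 2))

/-- The funnel controller
`û(y,t) = −g(y)ᵀ(g(y)g(y)ᵀ)⁻¹ (k ξ̂(y,t) ε̂(y,t) − ½ γ̇_d(t) ê(y,t))`. -/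
noncomputable def funnelController {n m : ℕ} (k : ℝ)
    (g : (Fin n → ℝ) → Matrix (Fin n) (Fin m) ℝ)
    (γL γU γL' γU' : ℝ → Fin n → ℝ) (y : Fin n → ℝ) (t : ℝ) : Fin m → ℝ :=
  -((g y)ᵀ.mulVec (((g y * (g y)ᵀ)⁻¹).mulVec (fun i =>
      k * xhat (γL t i) (γU t i) (y i) * terr (γL t i) (γU t i) (y i)
        - (1 / 2) * (γU' t i - γL' t i) * nerr (γL t i) (γU t i) (y i))))

open Real Filter

theorem terr_eq_log_div (L U z : ℝ) : terr L U z = log ((z - L) / (U - z)) := by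
  rcases eq_or_ne U L with rfl | hD
  · rcases eq_or_ne z U with rfl | hz
    · simp [terr, nerr]
    · rw [show (z - U) / (U - z) = -1 by rw [← neg_sub, neg_div_self (sub_ne_zero.2 hz.symm)]]
      simp [terr, nerr]
  · have hD : U - L ≠ 0 := sub_ne_zero.2 hD
    rw [terr, nerr, one_add_div hD, one_sub_div hD, div_div_div_cancel_right₀ hD]
    congr 1
    rw [show U - L + (2 * z - (U + L)) = 2 * (z - L) by ring,
      show U - L - (2 * z - (U + L)) = 2 * (U - z) by ring, mul_div_mul_left _ _ two_ne_zero]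

theorem xhat_eq_div (L U z : ℝ) : xhat L U z = (U - L) / ((z - L) * (U - z)) := by
  rcases eq_or_ne U L with rfl | hD
  · simp [xhat]
  · have hD : U - L ≠ 0 := sub_ne_zero.2 hD
    rw [xhat, nerr, div_pow, one_sub_div (pow_ne_zero 2 hD), mul_div_assoc',
      show (U - L) ^ 2 - (2 * z - (U + L)) ^ 2 = 4 * ((z - L) * (U - z)) by ring,
      div_div_eq_mul_div, show 4 * (U - L) ^ 2 = (U - L) * (4 * (U - L)) by ring,
      mul_div_mul_left _ _ hD, mul_div_mul_left _ _ four_ne_zero]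

theorem hasDerivAt_terr {ℓ u z : ℝ → ℝ} {ℓ' u' z' t : ℝ} (hℓ : HasDerivAt ℓ ℓ' t)
    (hu : HasDerivAt u u' t) (hz : HasDerivAt z z' t) (hℓz : ℓ t < z t) (hzu : z t < u t) :
    HasDerivAt (fun s => terr (ℓ s) (u s) (z s))
      ((z' - ℓ') / (z t - ℓ t) - (u' - z') / (u t - z t)) t := by
  have hzℓ : z t - ℓ t ≠ 0 := (sub_pos.2 hℓz).ne'
  have huz : u t - z t ≠ 0 := (sub_pos.2 hzu).ne'
  simp only [terr_eq_log_div]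
  refine (((hz.sub hℓ).div (hu.sub hz) huz).log (div_ne_zero hzℓ huz)).congr_deriv ?_
  simp only [Pi.sub_apply, Pi.div_apply]
  field_simp

theorem four_div_le_xhat {L U z : ℝ} (hLz : L < z) (hzU : z < U) :
    4 / (U - L) ≤ xhat L U z := by
  rw [xhat_eq_div, div_le_div_iff₀ (by linarith) (mul_pos (by linarith) (by linarith))]
  nlinarith [sq_nonneg (2 * z - U - L)]

theorem two_div_le_xhat {L U z C : ℝ} (hL : |L| ≤ C) (hU : |U| ≤ C) (hLz : L < z) (hzU : z < U) :
    2 / C ≤ xhat L U z := by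
  have hUL : U - L ≤ 2 * C := by linarith [le_abs_self U, neg_abs_le L]
  calc 2 / C = 4 / (2 * C) := by rw [← div_div, show (4 : ℝ) / 2 = 2 by norm_num]
    _ ≤ 4 / (U - L) := div_le_div_of_nonneg_left zero_le_four (by linarith) hUL
    _ ≤ xhat L U z := four_div_le_xhat hLz hzU

theorem div_exp_add_one_le_sub_of_terr_le {L U z B : ℝ} (hLz : L < z) (hzU : z < U)
    (hB : terr L U z ≤ B) : (U - L) / (exp B + 1) ≤ U - z := by
  rw [terr_eq_log_div, log_le_iff_le_exp (div_pos (by linarith) (by linarith)),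
    div_le_iff₀ (by linarith)] at hB
  rw [div_le_iff₀ (by positivity)]
  linarith

theorem div_exp_add_one_le_sub_of_neg_le_terr {L U z B : ℝ} (hLz : L < z) (hzU : z < U)
    (hB : -B ≤ terr L U z) : (U - L) / (exp B + 1) ≤ z - L := by
  rw [terr_eq_log_div, le_log_iff_exp_le (div_pos (by linarith) (by linarith)),
    le_div_iff₀ (by linarith), exp_neg] at hB
  rw [div_le_iff₀ (by positivity)]
  have := mul_le_mul_of_nonneg_left hB (exp_pos B).le
  rw [← mul_assoc, mul_inv_cancel₀ (exp_pos B).ne'] at this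
  linarith

theorem div_exp_add_one_le_min_of_abs_terr_le {L U z B : ℝ} (hLz : L < z) (hzU : z < U)
    (hB : |terr L U z| ≤ B) : (U - L) / (exp B + 1) ≤ min (z - L) (U - z) :=
  le_min (div_exp_add_one_le_sub_of_neg_le_terr hLz hzU (abs_le.1 hB).1)
    (div_exp_add_one_le_sub_of_terr_le hLz hzU (abs_le.1 hB).2)

theorem mulVec_funnelController {n m : ℕ} (k : ℝ) (g : (Fin n → ℝ) → Matrix (Fin n) (Fin m) ℝ)
    (γL γU γL' γU' : ℝ → Fin n → ℝ) (y : Fin n → ℝ) (t : ℝ)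
    (hg : IsUnit (g y * (g y)ᵀ).det) :
    g y *ᵥ funnelController k g γL γU γL' γU' y t = -fun i =>
      k * xhat (γL t i) (γU t i) (y i) * terr (γL t i) (γU t i) (y i)
        - (1 / 2) * (γU' t i - γL' t i) * nerr (γL t i) (γU t i) (y i) := by
  rw [funnelController, mulVec_neg, mulVec_mulVec, mulVec_mulVec, mul_nonsing_inv _ hg,
    one_mulVec]

theorem hasDerivAt_terr_of_closedLoop {n m : ℕ} {g : (Fin n → ℝ) → Matrix (Fin n) (Fin m) ℝ}
    {γL γU γL' γU' x : ℝ → Fin n → ℝ} {v : Fin n → ℝ} {k t : ℝ} {i : Fin n}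
    (hg : IsUnit (g (x t) * (g (x t))ᵀ).det)
    (hL : HasDerivAt γL (γL' t) t) (hU : HasDerivAt γU (γU' t) t)
    (hx : HasDerivAt x (v + g (x t) *ᵥ funnelController k g γL γU γL' γU' (x t) t) t)
    (hin : γL t i < x t i ∧ x t i < γU t i) :
    HasDerivAt (fun s => terr (γL s i) (γU s i) (x s i))
      (xhat (γL t i) (γU t i) (x t i) * (v i - (γU' t i + γL' t i) / 2
        - k * xhat (γL t i) (γU t i) (x t i) * terr (γL t i) (γU t i) (x t i))) t := by
  rw [mulVec_funnelController k g γL γU γL' γU' (x t) t hg] at hx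
  have hLx : x t i - γL t i ≠ 0 := (sub_pos.2 hin.1).ne'
  have hxU : γU t i - x t i ≠ 0 := (sub_pos.2 hin.2).ne'
  have hLU : γU t i - γL t i ≠ 0 := (sub_pos.2 (hin.1.trans hin.2)).ne'
  refine (hasDerivAt_terr (hasDerivAt_pi.1 hL i) (hasDerivAt_pi.1 hU i) (hasDerivAt_pi.1 hx i)
    hin.1 hin.2).congr_deriv ?_
  simp only [Pi.add_apply, Pi.neg_apply]
  rw [xhat_eq_div, nerr]
  field_simp
  ring

theorem image_le_of_hasDerivAt_mul_sub {w ξ d : ℝ → ℝ} {a b k c D B : ℝ} (hk : 0 ≤ k)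
    (hc : 0 < c) (hB : 0 ≤ B) (hw : ContinuousOn w (Icc a b))
    (hw' : ∀ t ∈ Ico a b, HasDerivAt w (ξ t * (d t - k * ξ t * w t)) t)
    (hξ : ∀ t ∈ Ico a b, c ≤ ξ t) (hd : ∀ t ∈ Ico a b, d t ≤ D) (hDB : D < k * c * B)
    (ha : w a ≤ B) : ∀ t ∈ Icc a b, w t ≤ B := by
  refine image_le_of_deriv_right_lt_deriv_boundary' hw (fun t ht => (hw' t ht).hasDerivWithinAt)
    ha continuousOn_const (fun t _ => hasDerivWithinAt_const t _ B) fun t ht hwt => ?_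
  have hkξB : k * c * B ≤ k * ξ t * B := by gcongr; exact hξ t ht
  rw [hwt]
  exact mul_neg_of_pos_of_neg (hc.trans_le (hξ t ht)) (by linarith [hd t ht])

theorem abs_image_le_of_hasDerivAt_mul_sub {w ξ d : ℝ → ℝ} {a b k c D B : ℝ} (hk : 0 ≤ k)
    (hc : 0 < c) (hw : ContinuousOn w (Icc a b))
    (hw' : ∀ t ∈ Ico a b, HasDerivAt w (ξ t * (d t - k * ξ t * w t)) t)
    (hξ : ∀ t ∈ Ico a b, c ≤ ξ t) (hd : ∀ t ∈ Ico a b, |d t| ≤ D) (hDB : D < k * c * B)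
    (ha : |w a| ≤ B) : ∀ t ∈ Icc a b, |w t| ≤ B := by
  have hB : 0 ≤ B := (abs_nonneg _).trans ha
  have hup := image_le_of_hasDerivAt_mul_sub hk hc hB hw hw' hξ (fun t ht => (le_abs_self _).trans
    (hd t ht)) hDB (le_abs_self _ |>.trans ha)
  have hlow := image_le_of_hasDerivAt_mul_sub (w := -w) (d := -d) hk hc hB hw.neg
    (fun t ht => ((hw' t ht).neg).congr_deriv (by simp only [Pi.neg_apply]; ring)) hξ
    (fun t ht => (neg_le_abs _).trans (hd t ht)) hDB ((neg_le_abs _).trans ha)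
  exact fun t ht => abs_le.2 ⟨neg_le.1 (hlow t ht), hup t ht⟩

theorem norm_le_of_forall_mem_Ioo {ι : Type*} [Fintype ι] {L U z : ι → ℝ} {C : ℝ}
    (hL : ‖L‖ ≤ C) (hU : ‖U‖ ≤ C) (hz : ∀ j, L j < z j ∧ z j < U j) : ‖z‖ ≤ C := by
  refine (pi_norm_le_iff_of_nonneg ((norm_nonneg L).trans hL)).2 fun j => abs_le.2 ⟨?_, ?_⟩
  · have : |L j| ≤ C := (norm_le_pi_norm L j).trans hL
    linarith [neg_abs_le (L j), (hz j).1]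
  · have : |U j| ≤ C := (norm_le_pi_norm U j).trans hU
    linarith [le_abs_self (U j), (hz j).2]

theorem abs_terr_le_of_forall_inside {n m : ℕ} {f : (Fin n → ℝ) → Fin n → ℝ}
    {g : (Fin n → ℝ) → Matrix (Fin n) (Fin m) ℝ} {γL γU γL' γU' x : ℝ → Fin n → ℝ}
    {k C M B b : ℝ} (hg : ∀ y, IsUnit (g y * (g y)ᵀ).det)
    (hγL : ∀ t ∈ Ici (0 : ℝ), HasDerivAt γL (γL' t) t)
    (hγU : ∀ t ∈ Ici (0 : ℝ), HasDerivAt γU (γU' t) t)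
    (hC : ∀ t ∈ Ici (0 : ℝ), ‖γL t‖ ≤ C ∧ ‖γU t‖ ≤ C ∧ ‖γL' t‖ ≤ C ∧ ‖γU' t‖ ≤ C)
    (hC0 : 0 < C) (hM : ∀ y ∈ Metric.closedBall 0 C, ‖f y‖ ≤ M) (hk : 0 < k)
    (hB : M + C < k * (2 / C) * B)
    (hx : ∀ t ∈ Icc 0 b,
      HasDerivAt x (f (x t) + g (x t) *ᵥ funnelController k g γL γU γL' γU' (x t) t) t)
    (hin : ∀ t ∈ Icc 0 b, ∀ i, γL t i < x t i ∧ x t i < γU t i) (i : Fin n)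
    (h0 : |terr (γL 0 i) (γU 0 i) (x 0 i)| ≤ B) :
    ∀ t ∈ Icc 0 b, |terr (γL t i) (γU t i) (x t i)| ≤ B := by
  have hderiv : ∀ t ∈ Icc 0 b, HasDerivAt (fun s => terr (γL s i) (γU s i) (x s i))
      (xhat (γL t i) (γU t i) (x t i) * ((f (x t) i - (γU' t i + γL' t i) / 2)
        - k * xhat (γL t i) (γU t i) (x t i) * terr (γL t i) (γU t i) (x t i))) t :=
    fun t ht => hasDerivAt_terr_of_closedLoop (hg _) (hγL t ht.1) (hγU t ht.1) (hx t ht)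
      (hin t ht i)
  have hξ : ∀ t ∈ Ico 0 b, 2 / C ≤ xhat (γL t i) (γU t i) (x t i) := fun t ht =>
    have hin := hin t (Ico_subset_Icc_self ht) i
    two_div_le_xhat ((norm_le_pi_norm _ i).trans (hC t ht.1).1)
      ((norm_le_pi_norm _ i).trans (hC t ht.1).2.1) hin.1 hin.2
  have hdrift : ∀ t ∈ Ico 0 b, |f (x t) i - (γU' t i + γL' t i) / 2| ≤ M + C := by
    intro t ht
    obtain ⟨hL, hU, hL', hU'⟩ := hC t ht.1
    have hf := abs_le.1 <| (norm_le_pi_norm _ i).trans <| hM _ <| mem_closedBall_zero_iff.2 <|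
      norm_le_of_forall_mem_Ioo hL hU (hin t (Ico_subset_Icc_self ht))
    have hL'i := abs_le.1 ((norm_le_pi_norm _ i).trans hL')
    have hU'i := abs_le.1 ((norm_le_pi_norm _ i).trans hU')
    exact abs_le.2 ⟨by linarith, by linarith⟩
  exact abs_image_le_of_hasDerivAt_mul_sub hk.le (by positivity)
    (fun t ht => (hderiv t ht).continuousAt.continuousWithinAt)
    (fun t ht => hderiv t (Ico_subset_Icc_self ht)) hξ hdrift hB h0

theorem pos_on_Icc_of_margin {ι : Type*} [Finite ι] {φ : ι → ℝ → ℝ} {a b μ : ℝ}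
    (hμ : 0 < μ) (hφ : ∀ j, ContinuousOn (φ j) (Icc a b)) (ha : ∀ j, 0 < φ j a)
    (hmargin : ∀ t ∈ Icc a b, (∀ s ∈ Icc a t, ∀ j, 0 < φ j s) → ∀ j, μ ≤ φ j t) :
    ∀ t ∈ Icc a b, ∀ j, 0 < φ j t := by
  by_contra! hexit
  set S := ⋃ j, {t ∈ Icc a b | φ j t ≤ 0}
  have hS : IsClosed S :=
    isClosed_iUnion_of_finite fun j => isClosed_Icc.isClosed_le (hφ j) continuousOn_const
  have hne : S.Nonempty := by
    obtain ⟨t, ht, j, hj⟩ := hexit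
    exact ⟨t, mem_iUnion.2 ⟨j, ht, hj⟩⟩
  have hbdd : BddBelow S := bddBelow_Icc.mono (iUnion_subset fun _ => sep_subset _ _)
  obtain ⟨j, hτ, hτj⟩ := mem_iUnion.1 (hS.csInf_mem hne hbdd)
  have hbefore : ∀ s ∈ Ico a (sInf S), ∀ j, 0 < φ j s := fun s hs j => not_le.1 fun hj =>
    (csInf_le hbdd (mem_iUnion.2 ⟨j, ⟨hs.1, hs.2.le.trans hτ.2⟩, hj⟩)).not_gt hs.2
  rcases hτ.1.eq_or_lt with hτa | hτa
  · exact (ha j).not_ge (hτa ▸ hτj)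
  · have : μ ≤ φ j (sInf S) :=
      ContinuousWithinAt.closure_le (closure_Ico hτa.ne ▸ right_mem_Icc.2 hτa.le)
        continuousWithinAt_const ((hφ j _ hτ).mono (Ico_subset_Icc_self.trans
          (Icc_subset_Icc_right hτ.2)))
        fun s hs => hmargin s ⟨hs.1, hs.2.le.trans hτ.2⟩
          (fun r hr => hbefore r ⟨hr.1, hr.2.trans_lt hs.2⟩) j
    linarith

theorem funnel_invariance_general {n m : ℕ}
    (f : (Fin n → ℝ) → (Fin n → ℝ))
    (g : (Fin n → ℝ) → Matrix (Fin n) (Fin m) ℝ)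
    (hf : LocallyLipschitz f)
    (hpd : ∀ y, (g y * (g y)ᵀ).PosDef)
    (γL γU γL' γU' : ℝ → Fin n → ℝ)
    (hγL : ∀ t ∈ Ici (0 : ℝ), HasDerivAt γL (γL' t) t)
    (hγU : ∀ t ∈ Ici (0 : ℝ), HasDerivAt γU (γU' t) t)
    (hbdd : ∃ C : ℝ, ∀ t ∈ Ici (0 : ℝ),
      ‖γL t‖ ≤ C ∧ ‖γU t‖ ≤ C ∧ ‖γL' t‖ ≤ C ∧ ‖γU' t‖ ≤ C)
    (hgap : ∃ δ > (0 : ℝ), ∀ t ∈ Ici (0 : ℝ), ∀ i, δ ≤ γU t i - γL t i)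
    (k : ℝ) (hk : 0 < k)
    (T : ℝ)
    (x : ℝ → Fin n → ℝ)
    (hxc : ContinuousOn x (Icc 0 T))
    (hx0 : ∀ i, γL 0 i < x 0 i ∧ x 0 i < γU 0 i)
    (hode : ∀ t ∈ Icc (0 : ℝ) T,
      (∀ s ∈ Icc (0 : ℝ) t, ∀ i, γL s i < x s i ∧ x s i < γU s i) →
      HasDerivAt x
        (f (x t) + (g (x t)).mulVec (funnelController k g γL γU γL' γU' (x t) t)) t) :
    ∀ t ∈ Icc (0 : ℝ) T, ∀ i, γL t i < x t i ∧ x t i < γU t i := by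
  obtain ⟨C, hC0, hC⟩ : ∃ C > 0, ∀ t ∈ Ici (0 : ℝ),
      ‖γL t‖ ≤ C ∧ ‖γU t‖ ≤ C ∧ ‖γL' t‖ ≤ C ∧ ‖γU' t‖ ≤ C := by
    obtain ⟨C₀, hC₀⟩ := hbdd
    refine ⟨max C₀ 1, by positivity, fun t ht => ?_⟩
    obtain ⟨hL, hU, hL', hU'⟩ := hC₀ t ht
    have hle := le_max_left C₀ 1
    exact ⟨hL.trans hle, hU.trans hle, hL'.trans hle, hU'.trans hle⟩
  obtain ⟨δ, hδ, hgap⟩ := hgap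
  obtain ⟨M, hM⟩ := (isCompact_closedBall (0 : Fin n → ℝ) C).exists_bound_of_continuousOn
    hf.continuous.continuousOn
  obtain ⟨B, hB0, hBk⟩ : ∃ B, (∀ i, |terr (γL 0 i) (γU 0 i) (x 0 i)| ≤ B) ∧
      M + C < k * (2 / C) * B :=
    ((eventually_all.2 fun i => eventually_ge_atTop _).and
      ((tendsto_id.const_mul_atTop (by positivity)).eventually_gt_atTop _)).exists
  have hLc : ContinuousOn γL (Icc 0 T) := fun t ht => (hγL t ht.1).continuousAt.continuousWithinAt
  have hUc : ContinuousOn γU (Icc 0 T) := fun t ht => (hγU t ht.1).continuousAt.continuousWithinAt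
  have hmargin := pos_on_Icc_of_margin (φ := fun i t => min (x t i - γL t i) (γU t i - x t i))
    (μ := δ / (exp B + 1)) (by positivity)
    (fun i => ((continuousOn_pi.1 hxc i).sub (continuousOn_pi.1 hLc i)).inf
      ((continuousOn_pi.1 hUc i).sub (continuousOn_pi.1 hxc i)))
    (fun i => lt_min (sub_pos.2 (hx0 i).1) (sub_pos.2 (hx0 i).2)) fun b hb hin i => by
      simp only [lt_min_iff, sub_pos] at hin
      have hbi := hin b ⟨hb.1, le_rfl⟩ i
      have hεb := abs_terr_le_of_forall_inside (fun y => (hpd y).det_pos.ne'.isUnit) hγL hγU hC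
        hC0 hM hk hBk (fun t ht => hode t ⟨ht.1, ht.2.trans hb.2⟩
          fun s hs => hin s ⟨hs.1, hs.2.trans ht.2⟩) hin i (hB0 i) b ⟨hb.1, le_rfl⟩
      exact (div_le_div_of_nonneg_right (hgap b hb.1 i) (by positivity)).trans
        (div_exp_add_one_le_min_of_abs_terr_le hbi.1 hbi.2 hεb)
  simpa only [lt_min_iff, sub_pos] using hmargin

/-- Funnel invariance: every admissible closed-loop solution of
`ẋ = f(x) + g(x)û(x,t)` starting strictly inside the funnel remains strictly inside the
funnel on `[0, T]`. -/
theorem funnel_invariance {n m : ℕ}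
    (f : (Fin n → ℝ) → (Fin n → ℝ))
    (g : (Fin n → ℝ) → Matrix (Fin n) (Fin m) ℝ)
    (hf : LocallyLipschitz f)
    (hg : LocallyLipschitz (fun y => fun i j => g y i j))
    (hpd : ∀ y, (g y * (g y)ᵀ).PosDef)
    (γL γU γL' γU' : ℝ → Fin n → ℝ)
    (hγL : ∀ t ∈ Ici (0 : ℝ), HasDerivAt γL (γL' t) t)
    (hγU : ∀ t ∈ Ici (0 : ℝ), HasDerivAt γU (γU' t) t)
    (hγL'c : ContinuousOn γL' (Ici 0)) (hγU'c : ContinuousOn γU' (Ici 0))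
    (hbdd : ∃ C : ℝ, ∀ t ∈ Ici (0 : ℝ),
      ‖γL t‖ ≤ C ∧ ‖γU t‖ ≤ C ∧ ‖γL' t‖ ≤ C ∧ ‖γU' t‖ ≤ C)
    (hgap : ∃ δ > (0 : ℝ), ∀ t ∈ Ici (0 : ℝ), ∀ i, δ ≤ γU t i - γL t i)
    (k : ℝ) (hk : 0 < k)
    (T : ℝ) (hT : 0 < T)
    (x : ℝ → Fin n → ℝ)
    (hxc : ContinuousOn x (Icc 0 T))
    (hx0 : ∀ i, γL 0 i < x 0 i ∧ x 0 i < γU 0 i)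
    (hode : ∀ t ∈ Icc (0 : ℝ) T,
      (∀ s ∈ Icc (0 : ℝ) t, ∀ i, γL s i < x s i ∧ x s i < γU s i) →
      HasDerivAt x
        (f (x t) + (g (x t)).mulVec (funnelController k g γL γU γL' γU' (x t) t)) t) :
    ∀ t ∈ Icc (0 : ℝ) T, ∀ i, γL t i < x t i ∧ x t i < γU t i :=
  funnel_invariance_general f g hf hpd γL γU γL' γU' hγL hγU hbdd hgap k hk T x hxc hx0 hode
end
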